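/- arXiv:1509.04135 — 2 statements merged into one kernel-verified Lean document; each statement's English description precedes it below -/
import Mathlib

section
/- Fix all parameters except the investment drift, and let μI′ < μI″ be two investment drifts with ρ > μI″; assume h > 0 (h does not depend on μI). For k ∈ {′, ″} let r0ᵏ be the unique positive root of j with investment drift μIᵏ (then r0ᵏ > 1) and set q⋆ᵏ = r0ᵏ/((κ1 − κ0)·A·(r0ᵏ − 1)). Then q⋆″ < q⋆′: the investment threshold is strictly decreasing in the investment drift μI. -/
/-!
Both `j'` and `j''` are convex (a quadratic with nonnegative leading coefficient plus
nonnegative multiples of exponentials), with `j 0 = μI - ρ < 0` and `j 1 = -h < 0`, so a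
positive root lies beyond `1`. Raising the drift adds `(μI'' - μI') (1 - r)`, hence
`j'' r0' < 0`; as `j'' 1 < 0` as well, convexity pushes the root `r0''` of `j''` past `r0'`.
Finally `r ↦ r / (C (r - 1))` is strictly decreasing on `(1, ∞)` when `C > 0`.
-/

open Real Set

lemma convexOn_rpow_left_affine {b : ℝ} (hb : 0 < b) (k d : ℝ) :
    ConvexOn ℝ univ fun x : ℝ => b ^ (k * x + d) := by
  refine ((convexOn_rpow_left (rpow_pos_of_pos hb k)).smul (rpow_nonneg hb.le d)).congr
    fun x _ => ?_
  simp only [smul_eq_mul, rpow_add hb, rpow_mul hb.le]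
  ring

lemma convexOn_quadratic_add_rpow {a l₁ l₂ p q : ℝ} (b c k : ℝ) (ha : 0 ≤ a) (hl₁ : 0 ≤ l₁)
    (hl₂ : 0 ≤ l₂) (hp : 0 < p) (hq : 0 < q) :
    ConvexOn ℝ univ fun r : ℝ => a * r ^ 2 + b * r + c + l₁ * p ^ (k * r) + l₂ * q ^ (1 - r) := by
  have hquad : ConvexOn ℝ univ fun r : ℝ => a * r ^ 2 := even_two.convexOn_pow.smul ha
  have hlin : ConvexOn ℝ univ fun r : ℝ => b * r :=
    (LinearMap.mulLeft ℝ b).convexOn convex_univ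
  have hp' : ConvexOn ℝ univ fun r : ℝ => l₁ * p ^ (k * r) :=
    ((convexOn_rpow_left_affine hp k 0).smul hl₁).congr fun r _ => by simp
  have hq' : ConvexOn ℝ univ fun r : ℝ => l₂ * q ^ (1 - r) :=
    ((convexOn_rpow_left_affine hq (-1) 1).smul hl₂).congr fun r _ => by
      simp only [smul_eq_mul]; ring_nf
  exact (((hquad.add hlin).add_const c).add hp').add hq'

lemma ConvexOn.lt_of_neg_of_neg_of_nonneg {s : Set ℝ} {f : ℝ → ℝ} (hf : ConvexOn ℝ s f)
    {x y z : ℝ} (hx : x ∈ s) (hy : y ∈ s) (hfx : f x < 0) (hfy : f y < 0) (hfz : 0 ≤ f z)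
    (hxz : x ≤ z) : y < z := by
  by_contra! hzy
  have hz : z ∈ segment ℝ x y := by rw [segment_eq_Icc (hxz.trans hzy)]; exact ⟨hxz, hzy⟩
  exact ((hf.le_on_segment hx hy hz).trans_lt (max_lt hfx hfy)).not_ge hfz

lemma strictAntiOn_div_mul_sub_one {C : ℝ} (hC : 0 < C) :
    StrictAntiOn (fun r : ℝ => r / (C * (r - 1))) (Ioi 1) := by
  intro r hr s hs hrs
  simp only [mem_Ioi] at hr hs
  rw [div_lt_div_iff₀ (by nlinarith) (by nlinarith)]
  nlinarith

section CharacteristicFun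

variable (θ ρ μX σX lamX mX σI lamI mI : ℝ)

/-- The function `j` of the model, as a function of the investment drift `μI` and of `r`. -/
noncomputable def characteristicFun (μI r : ℝ) : ℝ :=
  ((θ ^ 2 * σX ^ 2 + σI ^ 2) / 2) * r ^ 2
    + ((μX - σX ^ 2 / 2 - lamX * mX) * θ - (μI + σI ^ 2 / 2 - lamI * mI)) * r
    + ((μI - lamI * mI) - (lamX + lamI) - ρ)
    + lamX * (1 + mX) ^ (θ * r) + lamI * (1 + mI) ^ (1 - r)

variable {θ ρ μX σX lamX mX σI lamI mI}

lemma convexOn_characteristicFun (hlamX : 0 ≤ lamX) (hmX : -1 < mX)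
    (hlamI : 0 ≤ lamI) (hmI : -1 < mI) (μI : ℝ) :
    ConvexOn ℝ univ (characteristicFun θ ρ μX σX lamX mX σI lamI mI μI) :=
  convexOn_quadratic_add_rpow _ _ _ (by positivity) hlamX hlamI (by linarith) (by linarith)

lemma characteristicFun_zero (μI : ℝ) :
    characteristicFun θ ρ μX σX lamX mX σI lamI mI μI 0 = μI - ρ := by
  simp only [characteristicFun, mul_zero, sub_zero, rpow_zero, rpow_one]
  ring

lemma characteristicFun_one (μI : ℝ) :
    characteristicFun θ ρ μX σX lamX mX σI lamI mI μI 1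
      = -(ρ - (μX + (θ - 1) * σX ^ 2 / 2 - lamX * mX) * θ - lamX * ((1 + mX) ^ θ - 1)) := by
  simp only [characteristicFun, mul_one, sub_self, rpow_zero]
  ring

lemma characteristicFun_drift_add (μI δ r : ℝ) :
    characteristicFun θ ρ μX σX lamX mX σI lamI mI (μI + δ) r
      = characteristicFun θ ρ μX σX lamX mX σI lamI mI μI r + δ * (1 - r) := by
  simp only [characteristicFun]
  ring

end CharacteristicFun

theorem threshold_decreasing_in_muI_general (θ ρ μX σX lamX mX σI lamI mI n κ0 κ1 h A : ℝ)
    (hlamX : 0 ≤ lamX) (hmX : -1 < mX)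
    (hlamI : 0 ≤ lamI) (hmI : -1 < mI)
    (hκ : κ0 < κ1)
    (hh : h = ρ - (μX + (θ - 1) * σX ^ 2 / 2 - lamX * mX) * θ
      - lamX * ((1 + mX) ^ θ - 1))
    (hhpos : 0 < h)
    (hA : A = Real.exp (-(h * n)) / h)
    (μI' μI'' : ℝ) (hμ : μI' < μI'') (hρ : μI'' < ρ)
    (j' j'' : ℝ → ℝ)
    (hj' : ∀ r : ℝ, j' r = ((θ ^ 2 * σX ^ 2 + σI ^ 2) / 2) * r ^ 2
      + ((μX - σX ^ 2 / 2 - lamX * mX) * θ - (μI' + σI ^ 2 / 2 - lamI * mI)) * r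
      + ((μI' - lamI * mI) - (lamX + lamI) - ρ)
      + lamX * (1 + mX) ^ (θ * r) + lamI * (1 + mI) ^ (1 - r))
    (hj'' : ∀ r : ℝ, j'' r = ((θ ^ 2 * σX ^ 2 + σI ^ 2) / 2) * r ^ 2
      + ((μX - σX ^ 2 / 2 - lamX * mX) * θ - (μI'' + σI ^ 2 / 2 - lamI * mI)) * r
      + ((μI'' - lamI * mI) - (lamX + lamI) - ρ)
      + lamX * (1 + mX) ^ (θ * r) + lamI * (1 + mI) ^ (1 - r))
    (r0' r0'' : ℝ)
    (hr0' : 0 < r0' ∧ j' r0' = 0) (hr0'' : 0 < r0'' ∧ j'' r0'' = 0) :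
    1 < r0' ∧ 1 < r0''
    ∧ r0'' / ((κ1 - κ0) * A * (r0'' - 1)) < r0' / ((κ1 - κ0) * A * (r0' - 1)) := by
  obtain rfl : j' = characteristicFun θ ρ μX σX lamX mX σI lamI mI μI' := funext hj'
  obtain rfl : j'' = characteristicFun θ ρ μX σX lamX mX σI lamI mI μI'' := funext hj''
  have hconv (μI : ℝ) : ConvexOn ℝ univ (characteristicFun θ ρ μX σX lamX mX σI lamI mI μI) :=
    convexOn_characteristicFun hlamX hmX hlamI hmI μI
  have hj_one (μI : ℝ) : characteristicFun θ ρ μX σX lamX mX σI lamI mI μI 1 < 0 := by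
    rw [characteristicFun_one, ← hh]; linarith
  have hr1 {μI r : ℝ} (hμI : μI < ρ)
      (hr : 0 < r ∧ characteristicFun θ ρ μX σX lamX mX σI lamI mI μI r = 0) : 1 < r :=
    (hconv μI).lt_of_neg_of_neg_of_nonneg (mem_univ 0) (mem_univ 1)
      (by rw [characteristicFun_zero]; linarith) (hj_one μI) hr.2.ge hr.1.le
  have hr1' := hr1 (hμ.trans hρ) hr0'
  have hr1'' := hr1 hρ hr0''
  have hj''_r0' : characteristicFun θ ρ μX σX lamX mX σI lamI mI μI'' r0' < 0 := by
    rw [← add_sub_cancel μI' μI'', characteristicFun_drift_add, hr0'.2]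
    nlinarith
  have hlt : r0' < r0'' :=
    (hconv μI'').lt_of_neg_of_neg_of_nonneg (mem_univ 1) (mem_univ r0') (hj_one μI'')
      hj''_r0' hr0''.2.ge hr1''.le
  have hC : 0 < (κ1 - κ0) * A := mul_pos (by linarith) (by rw [hA]; positivity)
  exact ⟨hr1', hr1'', strictAntiOn_div_mul_sub_one hC hr1' hr1'' hlt⟩

/-- The investment threshold `q⋆ = r0/((κ1-κ0) A (r0-1))` is strictly
decreasing in the investment drift `μI`. -/
theorem threshold_decreasing_in_muI (θ ρ μX σX lamX mX σI lamI mI n κ0 κ1 h A : ℝ)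
    (hθ : 0 < θ) (hσX : 0 < σX) (hlamX : 0 ≤ lamX) (hmX : -1 < mX)
    (hσI : 0 < σI) (hlamI : 0 ≤ lamI) (hmI : -1 < mI)
    (hn : 0 ≤ n) (hκ0 : 0 < κ0) (hκ : κ0 < κ1)
    (hh : h = ρ - (μX + (θ - 1) * σX ^ 2 / 2 - lamX * mX) * θ
      - lamX * ((1 + mX) ^ θ - 1))
    (hhpos : 0 < h)
    (hA : A = Real.exp (-(h * n)) / h)
    (μI' μI'' : ℝ) (hμ : μI' < μI'') (hρ : μI'' < ρ)
    (j' j'' : ℝ → ℝ)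
    (hj' : ∀ r : ℝ, j' r = ((θ ^ 2 * σX ^ 2 + σI ^ 2) / 2) * r ^ 2
      + ((μX - σX ^ 2 / 2 - lamX * mX) * θ - (μI' + σI ^ 2 / 2 - lamI * mI)) * r
      + ((μI' - lamI * mI) - (lamX + lamI) - ρ)
      + lamX * (1 + mX) ^ (θ * r) + lamI * (1 + mI) ^ (1 - r))
    (hj'' : ∀ r : ℝ, j'' r = ((θ ^ 2 * σX ^ 2 + σI ^ 2) / 2) * r ^ 2
      + ((μX - σX ^ 2 / 2 - lamX * mX) * θ - (μI'' + σI ^ 2 / 2 - lamI * mI)) * r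
      + ((μI'' - lamI * mI) - (lamX + lamI) - ρ)
      + lamX * (1 + mX) ^ (θ * r) + lamI * (1 + mI) ^ (1 - r))
    (r0' r0'' : ℝ)
    (hr0' : 0 < r0' ∧ j' r0' = 0) (hr0'' : 0 < r0'' ∧ j'' r0'' = 0) :
    1 < r0' ∧ 1 < r0''
    ∧ r0'' / ((κ1 - κ0) * A * (r0'' - 1)) < r0' / ((κ1 - κ0) * A * (r0' - 1)) :=
  threshold_decreasing_in_muI_general θ ρ μX σX lamX mX σI lamI mI n κ0 κ1 h A hlamX hmX hlamI hmI
    hκ hh hhpos hA μI' μI'' hμ hρ j' j'' hj' hj'' r0' r0'' hr0' hr0''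
end

section
/- Assume 0 < θ ≤ 1 and mX ≠ 0, and fix all parameters except the demand jump intensity. Let 0 ≤ λX′ < λX″ be two jump intensities; for k ∈ {′, ″} let hᵏ, jᵏ be h and j computed with λX = λXᵏ, assume ρ > μI and h′ > 0 (then h″ ≥ h′ > 0), let r0ᵏ be the unique positive root of jᵏ (then r0ᵏ > 1), set Aᵏ = e^(−hᵏ·n)/hᵏ and q⋆ᵏ = r0ᵏ/((κ1 − κ0)·Aᵏ·(r0ᵏ − 1)). If in addition θ·r0′ ≥ 1, then q⋆′ < q⋆″: the investment threshold is strictly increasing in the demand jump intensity λX. -/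
/-!
Both `h` and `j r` are affine in `λX`, with slopes `1 + θ mX - (1 + mX)^θ` and
`(1 + mX)^(θ r) - 1 - θ r mX`; Bernoulli's inequality makes the first nonnegative for `θ ≤ 1`
and the second nonnegative for `θ r ≥ 1`. Since `j` is convex with `j 0 = μI - ρ < 0` and
`j 1 = -h < 0`, its positive root exceeds `1`, and `j'' r0' ≥ j' r0' = 0` forces `r0'' ≤ r0'`.
The threshold equals `h e^(h n) / (κ1 - κ0) · r / (r - 1)`, increasing in `h > 0` and decreasing
in `r > 1`. Strictness comes from `h' < h''` when `θ r0' = 1` (then `θ < 1`), and from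
`r0'' < r0'` when `θ r0' > 1`.
-/

open Real Set

theorem ConvexOn.le_of_nonneg_apply {s : Set ℝ} {f : ℝ → ℝ} (hf : ConvexOn ℝ s f) {a b c : ℝ}
    (ha : a ∈ s) (hb : b ∈ s) (hfa : f a < 0) (hfb : f b ≤ 0) (hac : a < c) (hfc : 0 ≤ f c) :
    b ≤ c := by
  by_contra! hcb
  exact (hfc.trans (hf.le_left_of_right_le'' ha hb hac.le hcb (hfb.trans hfc))).not_gt hfa

theorem convexOn_rpow_mul_add {b : ℝ} (hb : 0 < b) (α β : ℝ) :
    ConvexOn ℝ univ fun r : ℝ => b ^ (α * r + β) := by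
  have := (convexOn_rpow_left (rpow_pos_of_pos hb α)).smul (rpow_pos_of_pos hb β).le
  refine this.congr fun r _ => ?_
  dsimp only
  rw [smul_eq_mul, rpow_add hb, rpow_mul hb.le, mul_comm]

theorem strictMonoOn_mul_exp_mul {n : ℝ} (hn : 0 ≤ n) :
    StrictMonoOn (fun h : ℝ => h * exp (h * n)) (Ioi 0) := fun a ha b _ hab =>
  mul_lt_mul hab (exp_le_exp.2 (by gcongr)) (exp_pos _) (ha.out.trans hab).le

theorem strictAntiOn_div_sub_one : StrictAntiOn (fun r : ℝ => r / (r - 1)) (Ioi 1) :=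
  fun a ha b hb hab => (div_lt_div_iff₀ (sub_pos.2 hb) (sub_pos.2 ha)).2 (by linarith)

theorem convexOn_quadratic {a : ℝ} (ha : 0 ≤ a) (b c : ℝ) :
    ConvexOn ℝ univ fun r : ℝ => a * r ^ 2 + b * r + c :=
  ((Even.convexOn_pow even_two).smul ha).add ((LinearMap.mul ℝ ℝ b).convexOn convex_univ)
    |>.add_const c

namespace InvestmentModel

variable (θ ρ μX σX mX μI σI lamI mI : ℝ)

noncomputable def h (lamX : ℝ) : ℝ :=
  ρ - (μX + (θ - 1) * σX ^ 2 / 2 - lamX * mX) * θ - lamX * ((1 + mX) ^ θ - 1)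

noncomputable def j (lamX r : ℝ) : ℝ :=
  ((θ ^ 2 * σX ^ 2 + σI ^ 2) / 2) * r ^ 2
    + ((μX - σX ^ 2 / 2 - lamX * mX) * θ - (μI + σI ^ 2 / 2 - lamI * mI)) * r
    + ((μI - lamI * mI) - (lamX + lamI) - ρ)
    + lamX * (1 + mX) ^ (θ * r) + lamI * (1 + mI) ^ (1 - r)

local notation "𝐡" => h θ ρ μX σX mX
local notation "𝐣" => j θ ρ μX σX mX μI σI lamI mI

theorem h_sub_h (l₁ l₂ : ℝ) : 𝐡 l₂ - 𝐡 l₁ = (l₂ - l₁) * (1 + θ * mX - (1 + mX) ^ θ) := by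
  simp only [h]; ring

theorem j_sub_j (l₁ l₂ r : ℝ) :
    𝐣 l₂ r - 𝐣 l₁ r = (l₂ - l₁) * ((1 + mX) ^ (θ * r) - (1 + θ * r * mX)) := by
  simp only [j]; ring

theorem j_zero (lamX : ℝ) : 𝐣 lamX 0 = μI - ρ := by
  simp [j]; ring

theorem j_one (lamX : ℝ) : 𝐣 lamX 1 = -𝐡 lamX := by
  simp [j, h]; ring

variable {θ ρ μX σX mX μI σI lamI mI}

theorem convexOn_j {lamX : ℝ} (hlamX : 0 ≤ lamX) (hlamI : 0 ≤ lamI) (hmX : -1 < mX)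
    (hmI : -1 < mI) : ConvexOn ℝ univ (𝐣 lamX) := by
  have hX : ConvexOn ℝ univ fun r : ℝ => (1 + mX) ^ (θ * r) := by
    simpa using convexOn_rpow_mul_add (neg_lt_iff_pos_add'.1 hmX) θ 0
  have hI : ConvexOn ℝ univ fun r : ℝ => (1 + mI) ^ (1 - r) := by
    simpa [neg_add_eq_sub] using convexOn_rpow_mul_add (neg_lt_iff_pos_add'.1 hmI) (-1) 1
  exact (((convexOn_quadratic (by positivity) _ _).add (hX.smul hlamX)).add
    (hI.smul hlamI)).congr fun _ _ => rfl

theorem monotone_h (hθ0 : 0 ≤ θ) (hθ1 : θ ≤ 1) (hmX : -1 ≤ mX) : Monotone 𝐡 := fun _ _ hl =>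
  sub_nonneg.1 <| by
    rw [h_sub_h]
    exact mul_nonneg (sub_nonneg.2 hl)
      (sub_nonneg.2 (rpow_one_add_le_one_add_mul_self hmX hθ0 hθ1))

theorem strictMono_h (hθ0 : 0 < θ) (hθ1 : θ < 1) (hmX : -1 ≤ mX) (hmX0 : mX ≠ 0) :
    StrictMono 𝐡 := fun _ _ hl =>
  sub_pos.1 <| by
    rw [h_sub_h]
    exact mul_pos (sub_pos.2 hl)
      (sub_pos.2 (rpow_one_add_lt_one_add_mul_self hmX hmX0 hθ0 hθ1))

theorem monotone_j_of_one_le {r : ℝ} (hmX : -1 ≤ mX) (hr : 1 ≤ θ * r) :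
    Monotone fun lamX => 𝐣 lamX r := fun _ _ hl =>
  sub_nonneg.1 <| by
    rw [j_sub_j]
    exact mul_nonneg (sub_nonneg.2 hl) (sub_nonneg.2 (one_add_mul_self_le_rpow_one_add hmX hr))

theorem strictMono_j_of_one_lt {r : ℝ} (hmX : -1 ≤ mX) (hmX0 : mX ≠ 0) (hr : 1 < θ * r) :
    StrictMono fun lamX => 𝐣 lamX r := fun _ _ hl =>
  sub_pos.1 <| by
    rw [j_sub_j]
    exact mul_pos (sub_pos.2 hl) (sub_pos.2 (one_add_mul_self_lt_rpow_one_add hmX hmX0 hr))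

theorem one_lt_of_j_eq_zero {lamX r : ℝ} (hlamX : 0 ≤ lamX) (hlamI : 0 ≤ lamI) (hmX : -1 < mX)
    (hmI : -1 < mI) (hρ : μI < ρ) (hh : 0 < 𝐡 lamX) (hr : 0 < r) (hjr : 𝐣 lamX r = 0) :
    1 < r := by
  have hj1 : 𝐣 lamX 1 < 0 := by rw [j_one]; linarith
  refine lt_of_le_of_ne ((convexOn_j hlamX hlamI hmX hmI).le_of_nonneg_apply (mem_univ 0)
    (mem_univ 1) (by rw [j_zero]; linarith) hj1.le hr hjr.ge) ?_
  rintro rfl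
  exact hj1.ne hjr

theorem le_of_j_eq_zero_of_nonneg {lamX r c : ℝ} (hlamX : 0 ≤ lamX) (hlamI : 0 ≤ lamI)
    (hmX : -1 < mX) (hmI : -1 < mI) (hh : 0 < 𝐡 lamX) (hjr : 𝐣 lamX r = 0) (hc : 1 < c)
    (hjc : 0 ≤ 𝐣 lamX c) : r ≤ c :=
  (convexOn_j hlamX hlamI hmX hmI).le_of_nonneg_apply (mem_univ 1) (mem_univ r)
    (by rw [j_one]; linarith) hjr.le hc hjc

/-- The paper's `q⋆ = r / (κ A (r - 1))` with `A = e^(-h n) / h`, where `κ = κ1 - κ0`. -/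
noncomputable def threshold (κ n h r : ℝ) : ℝ := r / (κ * (exp (-(h * n)) / h) * (r - 1))

theorem threshold_eq (κ n h r : ℝ) : threshold κ n h r = h * exp (h * n) * (r / (r - 1)) / κ := by
  simp only [threshold, exp_neg, div_eq_mul_inv, mul_inv, inv_inv]; ring

theorem threshold_lt_threshold {κ n h₁ h₂ r₁ r₂ : ℝ} (hκ : 0 < κ) (hn : 0 ≤ n) (hh₁ : 0 < h₁)
    (hh : h₁ ≤ h₂) (hr₂ : 1 < r₂) (hr : r₂ ≤ r₁) (hlt : h₁ < h₂ ∨ r₂ < r₁) :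
    threshold κ n h₁ r₁ < threshold κ n h₂ r₂ := by
  have hh₂ : 0 < h₂ := hh₁.trans_le hh
  have hr₁ : 1 < r₁ := hr₂.trans_le hr
  have hF := strictMonoOn_mul_exp_mul hn
  have hG := strictAntiOn_div_sub_one
  rw [threshold_eq, threshold_eq]
  refine div_lt_div_of_pos_right ?_ hκ
  have hG₁ : 0 < r₁ / (r₁ - 1) := div_pos (by linarith) (by linarith)
  rcases hlt with hlt | hlt
  · exact mul_lt_mul (hF hh₁ hh₂ hlt) (hG.antitoneOn hr₂ hr₁ hr) hG₁ (by positivity)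
  · exact mul_lt_mul' (hF.monotoneOn hh₁ hh₂ hh) (hG hr₂ hr₁ hlt) hG₁.le (by positivity)

end InvestmentModel

theorem threshold_increasing_in_lamX_general (θ ρ μX σX mX μI σI lamI mI n κ0 κ1 : ℝ)
    (hθ : 0 < θ) (hθ1 : θ ≤ 1) (hmX : -1 < mX) (hmX0 : mX ≠ 0)
    (hlamI : 0 ≤ lamI) (hmI : -1 < mI)
    (hn : 0 ≤ n) (hκ : κ0 < κ1)
    (hρ : μI < ρ)
    (lamX' lamX'' : ℝ) (hlamX' : 0 ≤ lamX') (hlam : lamX' < lamX'')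
    (h' h'' A' A'' : ℝ)
    (hh' : h' = ρ - (μX + (θ - 1) * σX ^ 2 / 2 - lamX' * mX) * θ
      - lamX' * ((1 + mX) ^ θ - 1))
    (hh'' : h'' = ρ - (μX + (θ - 1) * σX ^ 2 / 2 - lamX'' * mX) * θ
      - lamX'' * ((1 + mX) ^ θ - 1))
    (hh'pos : 0 < h')
    (hA' : A' = Real.exp (-(h' * n)) / h')
    (hA'' : A'' = Real.exp (-(h'' * n)) / h'')
    (j' j'' : ℝ → ℝ)
    (hj' : ∀ r : ℝ, j' r = ((θ ^ 2 * σX ^ 2 + σI ^ 2) / 2) * r ^ 2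
      + ((μX - σX ^ 2 / 2 - lamX' * mX) * θ - (μI + σI ^ 2 / 2 - lamI * mI)) * r
      + ((μI - lamI * mI) - (lamX' + lamI) - ρ)
      + lamX' * (1 + mX) ^ (θ * r) + lamI * (1 + mI) ^ (1 - r))
    (hj'' : ∀ r : ℝ, j'' r = ((θ ^ 2 * σX ^ 2 + σI ^ 2) / 2) * r ^ 2
      + ((μX - σX ^ 2 / 2 - lamX'' * mX) * θ - (μI + σI ^ 2 / 2 - lamI * mI)) * r
      + ((μI - lamI * mI) - (lamX'' + lamI) - ρ)
      + lamX'' * (1 + mX) ^ (θ * r) + lamI * (1 + mI) ^ (1 - r))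
    (r0' r0'' : ℝ)
    (hr0' : 0 < r0' ∧ j' r0' = 0) (hr0'' : 0 < r0'' ∧ j'' r0'' = 0)
    (hθr : 1 ≤ θ * r0') :
    h' ≤ h'' ∧ 1 < r0' ∧ 1 < r0''
    ∧ r0' / ((κ1 - κ0) * A' * (r0' - 1)) < r0'' / ((κ1 - κ0) * A'' * (r0'' - 1)) := by
  obtain ⟨hr0'pos, hjr0'⟩ := hr0'
  obtain ⟨hr0''pos, hjr0''⟩ := hr0''
  set H := InvestmentModel.h θ ρ μX σX mX
  set J := InvestmentModel.j θ ρ μX σX mX μI σI lamI mI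
  obtain rfl : h' = H lamX' := hh'
  obtain rfl : h'' = H lamX'' := hh''
  obtain rfl : j' = J lamX' := funext hj'
  obtain rfl : j'' = J lamX'' := funext hj''
  subst hA' hA''
  have hlamX'' : 0 ≤ lamX'' := hlamX'.trans hlam.le
  have hh_le : H lamX' ≤ H lamX'' := InvestmentModel.monotone_h hθ.le hθ1 hmX.le hlam.le
  have hh''pos : 0 < H lamX'' := hh'pos.trans_le hh_le
  have hr0'gt := InvestmentModel.one_lt_of_j_eq_zero hlamX' hlamI hmX hmI hρ hh'pos hr0'pos hjr0'
  have hr0''gt :=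
    InvestmentModel.one_lt_of_j_eq_zero hlamX'' hlamI hmX hmI hρ hh''pos hr0''pos hjr0''
  have hr_le : r0'' ≤ r0' :=
    InvestmentModel.le_of_j_eq_zero_of_nonneg hlamX'' hlamI hmX hmI hh''pos hjr0'' hr0'gt
      (hjr0'.symm.le.trans (InvestmentModel.monotone_j_of_one_le hmX.le hθr hlam.le))
  have hstrict : H lamX' < H lamX'' ∨ r0'' < r0' := by
    rcases hθr.eq_or_lt with hθr | hθr
    · exact .inl (InvestmentModel.strictMono_h hθ (by nlinarith) hmX.le hmX0 hlam)
    · refine .inr (hr_le.lt_of_ne fun heq => ?_)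
      have hgap : J lamX' r0' < J lamX'' r0' :=
        InvestmentModel.strictMono_j_of_one_lt hmX.le hmX0 hθr hlam
      rw [hjr0', ← heq, hjr0''] at hgap
      exact hgap.false
  exact ⟨hh_le, hr0'gt, hr0''gt, InvestmentModel.threshold_lt_threshold (sub_pos.2 hκ) hn hh'pos
    hh_le hr0''gt hr_le hstrict⟩

/-- For `1/r0 ≤ θ ≤ 1` and `mX ≠ 0`, the investment threshold
`q⋆ = r0/((κ1-κ0) A (r0-1))` is strictly increasing in the demand jump intensity `λX`. -/
theorem threshold_increasing_in_lamX (θ ρ μX σX mX μI σI lamI mI n κ0 κ1 : ℝ)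
    (hθ : 0 < θ) (hθ1 : θ ≤ 1) (hσX : 0 < σX) (hmX : -1 < mX) (hmX0 : mX ≠ 0)
    (hσI : 0 < σI) (hlamI : 0 ≤ lamI) (hmI : -1 < mI)
    (hn : 0 ≤ n) (hκ0 : 0 < κ0) (hκ : κ0 < κ1)
    (hρ : μI < ρ)
    (lamX' lamX'' : ℝ) (hlamX' : 0 ≤ lamX') (hlam : lamX' < lamX'')
    (h' h'' A' A'' : ℝ)
    (hh' : h' = ρ - (μX + (θ - 1) * σX ^ 2 / 2 - lamX' * mX) * θ
      - lamX' * ((1 + mX) ^ θ - 1))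
    (hh'' : h'' = ρ - (μX + (θ - 1) * σX ^ 2 / 2 - lamX'' * mX) * θ
      - lamX'' * ((1 + mX) ^ θ - 1))
    (hh'pos : 0 < h')
    (hA' : A' = Real.exp (-(h' * n)) / h')
    (hA'' : A'' = Real.exp (-(h'' * n)) / h'')
    (j' j'' : ℝ → ℝ)
    (hj' : ∀ r : ℝ, j' r = ((θ ^ 2 * σX ^ 2 + σI ^ 2) / 2) * r ^ 2
      + ((μX - σX ^ 2 / 2 - lamX' * mX) * θ - (μI + σI ^ 2 / 2 - lamI * mI)) * r
      + ((μI - lamI * mI) - (lamX' + lamI) - ρ)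
      + lamX' * (1 + mX) ^ (θ * r) + lamI * (1 + mI) ^ (1 - r))
    (hj'' : ∀ r : ℝ, j'' r = ((θ ^ 2 * σX ^ 2 + σI ^ 2) / 2) * r ^ 2
      + ((μX - σX ^ 2 / 2 - lamX'' * mX) * θ - (μI + σI ^ 2 / 2 - lamI * mI)) * r
      + ((μI - lamI * mI) - (lamX'' + lamI) - ρ)
      + lamX'' * (1 + mX) ^ (θ * r) + lamI * (1 + mI) ^ (1 - r))
    (r0' r0'' : ℝ)
    (hr0' : 0 < r0' ∧ j' r0' = 0) (hr0'' : 0 < r0'' ∧ j'' r0'' = 0)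
    (hθr : 1 ≤ θ * r0') :
    h' ≤ h'' ∧ 1 < r0' ∧ 1 < r0''
    ∧ r0' / ((κ1 - κ0) * A' * (r0' - 1)) < r0'' / ((κ1 - κ0) * A'' * (r0'' - 1)) :=
  threshold_increasing_in_lamX_general θ ρ μX σX mX μI σI lamI mI n κ0 κ1 hθ hθ1 hmX hmX0 hlamI hmI
    hn hκ hρ lamX' lamX'' hlamX' hlam h' h'' A' A'' hh' hh'' hh'pos hA' hA'' j' j'' hj' hj'' r0'
    r0'' hr0' hr0'' hθr
end
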